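/- arXiv:2511.18492 — 3 statements merged into one kernel-verified Lean document; each statement's English description precedes it below -/
import Mathlib

section
/- Let (x_a, v_a, T_a) solve the TCS system with constant weights φ_ab = ζ_ab = 1, zero total momentum Σ_a v_a(0) = 0, and 0 < T_a(t) ≤ T̄ for all a, t. Then V(t) := (Σ_a |v_a(t)|²)^{1/2} satisfies V(t) ≤ V(0) e^{−t/T̄} for all t ≥ 0. -/
/-!
Total momentum is conserved, so the cross term `(1/N) ⟪Σ v_a, Σ v_b / T_b⟫` drops out of the
energy identity and the kinetic energy `E = Σ ‖v_a‖²` satisfies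
`E' = -2 Σ ‖v_a‖² / T_a ≤ -(2 / T̄) E`. Grönwall gives `E t ≤ E 0 * exp (-2 t / T̄)`,
and taking square roots gives the claim.
-/

open RealInnerProductSpace

section TCSVelocityField

variable {ι E : Type*} [Fintype ι] [NormedAddCommGroup E] [InnerProductSpace ℝ E]

/-- Right-hand side of the TCS velocity equation with unit weights `φ = ζ = 1`, in terms of the
inverse temperatures `w b = 1 / T b`. -/
noncomputable def tcsVelocityField (w : ι → ℝ) (x : ι → E) (a : ι) : E :=
  (Fintype.card ι : ℝ)⁻¹ • ∑ b, (w b • x b - w a • x a)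

theorem sum_tcsVelocityField (w : ι → ℝ) (x : ι → E) : ∑ a, tcsVelocityField w x a = 0 := by
  simp [tcsVelocityField, ← Finset.smul_sum, Finset.sum_sub_distrib]

theorem sum_inner_tcsVelocityField {w : ι → ℝ} {x : ι → E} (hx : ∑ a, x a = 0) :
    ∑ a, ⟪x a, tcsVelocityField w x a⟫ = -∑ a, w a * ‖x a‖ ^ 2 := by
  have hinner (a : ι) : ⟪x a, tcsVelocityField w x a⟫
      = (Fintype.card ι : ℝ)⁻¹ * ⟪x a, ∑ b, w b • x b⟫ - w a * ‖x a‖ ^ 2 := by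
    have hcard : (Fintype.card ι : ℝ) ≠ 0 :=
      Nat.cast_ne_zero.mpr (Fintype.card_pos_iff.mpr ⟨a⟩).ne'
    simp only [tcsVelocityField, inner_smul_right, Finset.sum_sub_distrib, inner_sub_right,
      Finset.sum_const, Finset.card_univ, ← Nat.cast_smul_eq_nsmul ℝ, real_inner_self_eq_norm_sq]
    field_simp
  simp only [hinner, Finset.sum_sub_distrib, ← Finset.mul_sum, ← sum_inner, hx, inner_zero_left,
    mul_zero, zero_sub]

theorem sum_eq_sum_zero_of_hasDerivAt_tcsVelocityField {v : ι → ℝ → E} {w : ℝ → ι → ℝ}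
    (hv : ∀ a t, HasDerivAt (v a) (tcsVelocityField (w t) (fun b ↦ v b t) a) t) (t : ℝ) :
    ∑ a, v a t = ∑ a, v a 0 := by
  have hsum (s : ℝ) : HasDerivAt (fun u ↦ ∑ a, v a u) 0 s := by
    have := HasDerivAt.fun_sum fun a (_ : a ∈ Finset.univ) ↦ hv a s
    rwa [sum_tcsVelocityField] at this
  exact is_const_of_deriv_eq_zero (fun s ↦ (hsum s).differentiableAt) (fun s ↦ (hsum s).deriv) t 0

theorem hasDerivAt_sum_norm_sq_of_hasDerivAt_tcsVelocityField {v : ι → ℝ → E} {w : ℝ → ι → ℝ}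
    (hv : ∀ a t, HasDerivAt (v a) (tcsVelocityField (w t) (fun b ↦ v b t) a) t)
    (hmom : ∑ a, v a 0 = 0) (t : ℝ) :
    HasDerivAt (fun s ↦ ∑ a, ‖v a s‖ ^ 2) (-2 * ∑ a, w t a * ‖v a t‖ ^ 2) t := by
  have hmom_t : ∑ a, v a t = 0 := (sum_eq_sum_zero_of_hasDerivAt_tcsVelocityField hv t).trans hmom
  have := HasDerivAt.fun_sum fun a (_ : a ∈ Finset.univ) ↦ (hv a t).norm_sq
  rwa [← Finset.mul_sum, sum_inner_tcsVelocityField hmom_t, mul_neg, ← neg_mul] at this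

end TCSVelocityField

theorem le_mul_exp_of_hasDerivAt_le_neg_mul {f f' : ℝ → ℝ} {K : ℝ}
    (hf : ∀ t, HasDerivAt f (f' t) t) (hbound : ∀ t, f' t ≤ -K * f t) {t : ℝ} (ht : 0 ≤ t) :
    f t ≤ f 0 * Real.exp (-K * t) := by
  have := le_gronwallBound_of_liminf_deriv_right_le (K := -K) (ε := 0) (b := t)
    (fun x _ ↦ (hf x).continuousAt.continuousWithinAt)
    (fun x _ _ hr ↦ (hf x).hasDerivWithinAt.liminf_right_slope_le hr) le_rfl
    (fun x _ ↦ (hbound x).trans_eq (add_zero _).symm) t ⟨ht, le_rfl⟩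
  rwa [gronwallBound_ε0, sub_zero] at this

theorem tcs_constant_weight_velocity_decay_general
    (N d : ℕ)
    (v : Fin N → ℝ → EuclideanSpace ℝ (Fin d)) (T : Fin N → ℝ → ℝ)
    (Tbar : ℝ)
    (hT : ∀ a t, 0 < T a t ∧ T a t ≤ Tbar)
    (hmom0 : (∑ a, v a 0) = 0)
    (hv : ∀ a t, HasDerivAt (v a)
      ((N : ℝ)⁻¹ • ∑ b, ((T b t)⁻¹ • v b t - (T a t)⁻¹ • v a t)) t) :
    ∀ t : ℝ, 0 ≤ t →
      Real.sqrt (∑ a, ‖v a t‖ ^ 2)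
        ≤ Real.sqrt (∑ a, ‖v a 0‖ ^ 2) * Real.exp (-t / Tbar) := by
  intro t ht
  have hv' : ∀ a t, HasDerivAt (v a) (tcsVelocityField (fun b ↦ (T b t)⁻¹) (fun b ↦ v b t) a) t := by
    simpa only [tcsVelocityField, Fintype.card_fin] using hv
  have hdissip (s : ℝ) :
      -2 * ∑ a, (T a s)⁻¹ * ‖v a s‖ ^ 2 ≤ -(2 / Tbar) * ∑ a, ‖v a s‖ ^ 2 := by
    rw [neg_mul, neg_mul, neg_le_neg_iff, div_eq_mul_inv, mul_assoc, Finset.mul_sum]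
    gcongr with a
    · exact (hT a s).1
    · exact (hT a s).2
  have hE := le_mul_exp_of_hasDerivAt_le_neg_mul
    (hasDerivAt_sum_norm_sq_of_hasDerivAt_tcsVelocityField hv' hmom0) hdissip ht
  have hexp : Real.exp (-(2 / Tbar) * t) = Real.exp (-t / Tbar) ^ 2 := by
    rw [sq, ← Real.exp_add]
    ring_nf
  calc Real.sqrt (∑ a, ‖v a t‖ ^ 2)
      ≤ Real.sqrt ((∑ a, ‖v a 0‖ ^ 2) * Real.exp (-t / Tbar) ^ 2) :=
        Real.sqrt_le_sqrt (hexp ▸ hE)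
    _ = Real.sqrt (∑ a, ‖v a 0‖ ^ 2) * Real.exp (-t / Tbar) := by
      rw [Real.sqrt_mul' _ (sq_nonneg _), Real.sqrt_sq (Real.exp_pos _).le]

/-- Exponential decay of the velocity functional for constant unit weights. -/
theorem tcs_constant_weight_velocity_decay
    (N d : ℕ) (hN : 0 < N)
    (v : Fin N → ℝ → EuclideanSpace ℝ (Fin d)) (T : Fin N → ℝ → ℝ)
    (Tbar : ℝ) (hTbar : 0 < Tbar)
    (hT : ∀ a t, 0 < T a t ∧ T a t ≤ Tbar)
    (hmom0 : (∑ a, v a 0) = 0)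
    (hv : ∀ a t, HasDerivAt (v a)
      ((N : ℝ)⁻¹ • ∑ b, ((T b t)⁻¹ • v b t - (T a t)⁻¹ • v a t)) t) :
    ∀ t : ℝ, 0 ≤ t →
      Real.sqrt (∑ a, ‖v a t‖ ^ 2)
        ≤ Real.sqrt (∑ a, ‖v a 0‖ ^ 2) * Real.exp (-t / Tbar) :=
  tcs_constant_weight_velocity_decay_general N d v T Tbar hT hmom0 hv
end

section
/- Let (x_a, v_a, T_a) solve the TCS system with weights satisfying 0 < φ_lower ≤ φ_ab ≤ φ_lower + ε and 0 < T_lower ≤ T_a(t) ≤ T_upper, with zero total momentum. If ε ≤ φ_lower T_lower/(2 T_upper), then V(t) = (Σ_a |v_a(t)|²)^{1/2} satisfies V(t) ≤ V(0) e^{−(φ_lower/(2T_upper)) t}. -/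
open scoped BigOperators
open RealInnerProductSpace Finset

/-!
With `V² = ∑ₐ ‖vₐ‖²`, one has `(V²)' = (2/N) ∑ₐ,ᵦ φₐᵦ (⟪vₐ, vᵦ⟫ / Tᵦ - ‖vₐ‖² / Tₐ)`.
Split `φₐᵦ = φ_lower + (φₐᵦ - φ_lower)` in the first sum: the `φ_lower` part vanishes by zero
total momentum, and the perturbation is at most `(ε / T_lower) (∑ₐ ‖vₐ‖)² ≤ (ε / T_lower) N V²`
by Cauchy–Schwarz. The second sum is at least `N (φ_lower / T_upper) V²`. For small `ε` this gives
`(V²)' ≤ -(φ_lower / T_upper) V²`, and Grönwall's inequality concludes.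
-/

theorem le_mul_exp_of_hasDerivAt_le_mul {f f' : ℝ → ℝ} {K : ℝ}
    (hf : ∀ t, HasDerivAt f (f' t) t) (bound : ∀ t, f' t ≤ K * f t) {t : ℝ} (ht : 0 ≤ t) :
    f t ≤ f 0 * Real.exp (K * t) := by
  have h := le_gronwallBound_of_liminf_deriv_right_le (δ := f 0) (ε := 0) (b := t)
    (fun x _ => (hf x).continuousAt.continuousWithinAt)
    (fun x _ _ hr => (hf x).hasDerivWithinAt.liminf_right_slope_le hr) le_rfl
    (fun x _ => by simpa using bound x) t ⟨ht, le_rfl⟩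
  simpa [gronwallBound_ε0] using h

theorem sqrt_le_sqrt_mul_exp_of_le_mul_exp_two_mul {x y s : ℝ}
    (h : x ≤ y * Real.exp (2 * s)) : √x ≤ √y * Real.exp s := by
  calc √x ≤ √(y * Real.exp (2 * s)) := Real.sqrt_le_sqrt h
    _ = √y * Real.exp s := by
      rw [Real.sqrt_mul' y (Real.exp_pos _).le, ← Real.exp_half, mul_div_cancel_left₀ s two_ne_zero]

section

variable {ι E : Type*} [Fintype ι] [NormedAddCommGroup E] [InnerProductSpace ℝ E]

theorem sum_sum_mul_inner_eq_zero {u : ι → E} (hu : ∑ a, u a = 0) (s : ι → ℝ) :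
    ∑ a, ∑ b, s b * ⟪u a, u b⟫ = 0 := by
  rw [Finset.sum_comm]
  refine Finset.sum_eq_zero fun b _ => ?_
  rw [← Finset.mul_sum, ← sum_inner, hu, inner_zero_left, mul_zero]

theorem sum_sum_mul_inner_le (u : ι → E) {c : ι → ι → ℝ} {K : ℝ}
    (hc : ∀ a b, |c a b| ≤ K) (hK : 0 ≤ K) :
    ∑ a, ∑ b, c a b * ⟪u a, u b⟫ ≤ K * Fintype.card ι * ∑ a, ‖u a‖ ^ 2 := by
  have hterm : ∀ a b, c a b * ⟪u a, u b⟫ ≤ K * (‖u a‖ * ‖u b‖) := fun a b =>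
    calc c a b * ⟪u a, u b⟫ ≤ |c a b| * |⟪u a, u b⟫| := by rw [← abs_mul]; exact le_abs_self _
      _ ≤ K * (‖u a‖ * ‖u b‖) :=
        mul_le_mul (hc a b) (abs_real_inner_le_norm _ _) (abs_nonneg _) hK
  have hcs : (∑ a, ‖u a‖) ^ 2 ≤ Fintype.card ι * ∑ a, ‖u a‖ ^ 2 := by
    simpa using sq_sum_le_card_mul_sum_sq (s := univ) (f := fun a => ‖u a‖)
  calc ∑ a, ∑ b, c a b * ⟪u a, u b⟫ ≤ ∑ a, ∑ b, K * (‖u a‖ * ‖u b‖) :=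
        sum_le_sum fun a _ => sum_le_sum fun b _ => hterm a b
    _ = K * (∑ a, ‖u a‖) ^ 2 := by rw [sq, sum_mul_sum, mul_sum]; simp only [mul_sum]
    _ ≤ K * Fintype.card ι * ∑ a, ‖u a‖ ^ 2 := by
      rw [mul_assoc]; exact mul_le_mul_of_nonneg_left hcs hK

theorem card_mul_sum_le_sum_sum_mul {c : ι → ι → ℝ} {x : ι → ℝ} {m : ℝ}
    (hc : ∀ a b, m ≤ c a b) (hx : ∀ a, 0 ≤ x a) :
    Fintype.card ι * m * ∑ a, x a ≤ ∑ a, ∑ b, c a b * x a := by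
  calc Fintype.card ι * m * ∑ a, x a = ∑ a, ∑ _b : ι, m * x a := by
        simp only [sum_const, card_univ, nsmul_eq_mul, mul_sum, mul_assoc]
    _ ≤ ∑ a, ∑ b, c a b * x a :=
        sum_le_sum fun a _ => sum_le_sum fun b _ => mul_le_mul_of_nonneg_right (hc a b) (hx a)

noncomputable def tcsField (φ : ι → ι → ℝ) (T : ι → ℝ) (u : ι → E) (a : ι) : E :=
  ∑ b, φ a b • ((T b)⁻¹ • u b - (T a)⁻¹ • u a)

theorem sum_inner_tcsField (φ : ι → ι → ℝ) (T : ι → ℝ) (u : ι → E) :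
    ∑ a, ⟪u a, tcsField φ T u a⟫ =
      ∑ a, ∑ b, φ a b * (T b)⁻¹ * ⟪u a, u b⟫ - ∑ a, ∑ b, φ a b * (T a)⁻¹ * ‖u a‖ ^ 2 := by
  simp only [tcsField, inner_sum, inner_smul_right, inner_sub_right, real_inner_self_eq_norm_sq,
    ← sum_sub_distrib]
  exact sum_congr rfl fun a _ => sum_congr rfl fun b _ => by ring

theorem sum_inner_tcsField_le {φ : ι → ι → ℝ} {T : ι → ℝ} {u : ι → E} {φl Tl Tu ε : ℝ}
    (hu : ∑ a, u a = 0) (hφl : 0 ≤ φl) (hTl : 0 < Tl) (hε : 0 ≤ ε)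
    (hφ : ∀ a b, φl ≤ φ a b ∧ φ a b ≤ φl + ε) (hT : ∀ a, Tl ≤ T a ∧ T a ≤ Tu) :
    ∑ a, ⟪u a, tcsField φ T u a⟫ ≤ (ε / Tl - φl / Tu) * Fintype.card ι * ∑ a, ‖u a‖ ^ 2 := by
  have hTpos : ∀ a, 0 < T a := fun a => hTl.trans_le (hT a).1
  have hsplit : ∑ a, ∑ b, φ a b * (T b)⁻¹ * ⟪u a, u b⟫ =
      ∑ a, ∑ b, φl * (T b)⁻¹ * ⟪u a, u b⟫ + ∑ a, ∑ b, (φ a b - φl) * (T b)⁻¹ * ⟪u a, u b⟫ := by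
    simp only [← sum_add_distrib]
    exact sum_congr rfl fun a _ => sum_congr rfl fun b _ => by ring
  have hmom := sum_sum_mul_inner_eq_zero hu fun b => φl * (T b)⁻¹
  have hpert : ∑ a, ∑ b, (φ a b - φl) * (T b)⁻¹ * ⟪u a, u b⟫ ≤
      ε / Tl * Fintype.card ι * ∑ a, ‖u a‖ ^ 2 := by
    refine sum_sum_mul_inner_le u (fun a b => ?_) (by positivity)
    rw [abs_of_nonneg (mul_nonneg (sub_nonneg.2 (hφ a b).1) (inv_nonneg.2 (hTpos b).le)),
      div_eq_mul_inv]
    exact mul_le_mul (by linarith [(hφ a b).2]) (inv_anti₀ hTl (hT b).1)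
      (inv_nonneg.2 (hTpos b).le) hε
  have hdiss : Fintype.card ι * (φl / Tu) * ∑ a, ‖u a‖ ^ 2 ≤
      ∑ a, ∑ b, φ a b * (T a)⁻¹ * ‖u a‖ ^ 2 := by
    refine card_mul_sum_le_sum_sum_mul (fun a b => ?_) fun a => sq_nonneg _
    rw [div_eq_mul_inv]
    exact mul_le_mul (hφ a b).1 (inv_anti₀ (hTpos a) (hT a).2)
      (inv_nonneg.2 ((hTpos a).le.trans (hT a).2)) (hφl.trans (hφ a b).1)
  rw [sum_inner_tcsField, hsplit, hmom]
  linear_combination hpert + hdiss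

end

theorem tcs_perturbed_weight_velocity_decay_general
    (N d : ℕ) (hN : 0 < N)
    (v : Fin N → ℝ → EuclideanSpace ℝ (Fin d)) (T : Fin N → ℝ → ℝ)
    (φ : Fin N → Fin N → ℝ → ℝ)
    (φl Tl Tu ε : ℝ) (hφl : 0 < φl) (hTl : 0 < Tl) (hε : 0 < ε)
    (hφ : ∀ a b t, φl ≤ φ a b t ∧ φ a b t ≤ φl + ε)
    (hT : ∀ a t, Tl ≤ T a t ∧ T a t ≤ Tu)
    (hmom : ∀ t : ℝ, (∑ a, v a t) = 0)
    (hv : ∀ a t, HasDerivAt (v a)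
      ((N : ℝ)⁻¹ • ∑ b, φ a b t • ((T b t)⁻¹ • v b t - (T a t)⁻¹ • v a t)) t)
    (hεsmall : ε ≤ φl * Tl / (2 * Tu)) :
    ∀ t : ℝ, 0 ≤ t →
      Real.sqrt (∑ a, ‖v a t‖ ^ 2)
        ≤ Real.sqrt (∑ a, ‖v a 0‖ ^ 2) * Real.exp (-(φl / (2 * Tu)) * t) := by
  intro t ht
  have hderiv : ∀ s, HasDerivAt (fun s => ∑ a, ‖v a s‖ ^ 2) (∑ a, 2 * ⟪v a s,
      (N : ℝ)⁻¹ • tcsField (fun a b => φ a b s) (fun a => T a s) (fun a => v a s) a⟫) s :=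
    fun s => HasDerivAt.fun_sum fun a _ => (hv a s).norm_sq
  have hrate : ε / Tl - φl / Tu ≤ -(φl / (2 * Tu)) := by
    have : ε / Tl ≤ φl / (2 * Tu) := (div_le_iff₀ hTl).2 (hεsmall.trans_eq (by ring))
    linarith [show φl / Tu = 2 * (φl / (2 * Tu)) by ring]
  have hdecay : ∀ s, ∑ a, 2 * ⟪v a s,
      (N : ℝ)⁻¹ • tcsField (fun a b => φ a b s) (fun a => T a s) (fun a => v a s) a⟫ ≤
      2 * -(φl / (2 * Tu)) * ∑ a, ‖v a s‖ ^ 2 := by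
    intro s
    have key := sum_inner_tcsField_le (hmom s) hφl.le hTl hε.le (fun a b => hφ a b s)
      fun a => hT a s
    simp only [inner_smul_right, ← mul_assoc, ← mul_sum, Fintype.card_fin] at key ⊢
    have hNpos : (0 : ℝ) < N := Nat.cast_pos.2 hN
    calc 2 * (N : ℝ)⁻¹ * ∑ a, ⟪v a s, tcsField (fun a b => φ a b s) (fun a => T a s)
          (fun a => v a s) a⟫
        ≤ 2 * (N : ℝ)⁻¹ * ((ε / Tl - φl / Tu) * N * ∑ a, ‖v a s‖ ^ 2) :=
          mul_le_mul_of_nonneg_left key (by positivity)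
      _ = 2 * (ε / Tl - φl / Tu) * ∑ a, ‖v a s‖ ^ 2 := by field_simp
      _ ≤ 2 * -(φl / (2 * Tu)) * ∑ a, ‖v a s‖ ^ 2 := by gcongr
  refine sqrt_le_sqrt_mul_exp_of_le_mul_exp_two_mul ?_
  rw [← mul_assoc]
  exact le_mul_exp_of_hasDerivAt_le_mul hderiv hdecay ht

/-- Velocity decay under small perturbations of a constant communication weight. -/
theorem tcs_perturbed_weight_velocity_decay
    (N d : ℕ) (hN : 0 < N)
    (v : Fin N → ℝ → EuclideanSpace ℝ (Fin d)) (T : Fin N → ℝ → ℝ)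
    (φ : Fin N → Fin N → ℝ → ℝ)
    (φl Tl Tu ε : ℝ) (hφl : 0 < φl) (hTl : 0 < Tl) (hTu : 0 < Tu) (hε : 0 < ε)
    (hφ : ∀ a b t, φl ≤ φ a b t ∧ φ a b t ≤ φl + ε)
    (hT : ∀ a t, Tl ≤ T a t ∧ T a t ≤ Tu)
    (hmom : ∀ t : ℝ, (∑ a, v a t) = 0)
    (hv : ∀ a t, HasDerivAt (v a)
      ((N : ℝ)⁻¹ • ∑ b, φ a b t • ((T b t)⁻¹ • v b t - (T a t)⁻¹ • v a t)) t)
    (hεsmall : ε ≤ φl * Tl / (2 * Tu)) :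
    ∀ t : ℝ, 0 ≤ t →
      Real.sqrt (∑ a, ‖v a t‖ ^ 2)
        ≤ Real.sqrt (∑ a, ‖v a 0‖ ^ 2) * Real.exp (-(φl / (2 * Tu)) * t) :=
  tcs_perturbed_weight_velocity_decay_general N d hN v T φ φl Tl Tu ε hφl hTl hε hφ hT hmom hv
    hεsmall
end

section
/- For γ > √2, the ratio of modified Bessel functions satisfies 1 − 1/(2γ) ≤ K_0(γ)/K_1(γ) ≤ 1 − 1/(2γ) + 3/(8γ²) + 3/(16γ³). -/
/-- The modified Bessel function of the second kind of integer order `j`,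
defined by the integral representation
`K_j(γ) = (2^j j!/(2j)!) γ^{-j} ∫_γ^∞ e^{-λ} (λ² - γ²)^{j-1/2} dλ`. -/
noncomputable def besselK (j : ℕ) (γ : ℝ) : ℝ :=
  ((2 : ℝ) ^ j * (Nat.factorial j) / (Nat.factorial (2 * j))) * γ ^ (-(j : ℝ)) *
    ∫ l in Set.Ioi γ, Real.exp (-l) * (l ^ 2 - γ ^ 2) ^ ((j : ℝ) - 1 / 2)

/-!
Write `S(l) = √(l² - γ²)`, so that `K₀(γ) = ∫_γ^∞ e^{-l} / S` and
`γ K₁(γ) = ∫_γ^∞ e^{-l} S`. Integrating by parts against `e^{-l}` gives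
`∫_γ^∞ e^{-l} l / S = γ K₁` and `∫_γ^∞ e^{-l} l S = 2 γ K₁ + γ² K₀`. Integrating the pointwise
inequalities `l / S ≤ γ / S + S / (2γ)` and `γ / S + 3 S / (4γ) ≤ l / S + l S / (4γ²)` (with
gaps `(l - γ)² / (2γ S)` and `(l - γ)³ / (4γ² S)`) then yields `(1 - 1/(2γ)) K₁ ≤ K₀` and
`(γ - 1/4) K₀ ≤ (γ - 3/4 + 1/(2γ)) K₁`; the latter implies the upper bound once `γ ≥ 1/2`.
-/
open MeasureTheory Set Filter Topology Real

theorem integrableOn_exp_neg_mul_sub_rpow (γ : ℝ) {s : ℝ} (hs : -1 < s) :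
    IntegrableOn (fun l => exp (-l) * (l - γ) ^ s) (Ioi γ) := by
  have emb : MeasurableEmbedding (fun x : ℝ => x + γ) :=
    (MeasurableEquiv.addRight γ).measurableEmbedding
  have hmp : MeasurePreserving (fun x : ℝ => x + γ) (volume.restrict (Ioi 0))
      (volume.restrict (Ioi γ)) := by
    simpa [preimage_add_const_Ioi] using
      (measurePreserving_add_right volume γ).restrict_preimage_emb emb (Ioi γ)
  rw [IntegrableOn, ← hmp.integrable_comp_emb emb]
  refine IntegrableOn.congr_fun ((GammaIntegral_convergent (s := s + 1) (by linarith)).const_mul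
    (exp (-γ))) (fun x _ => ?_) measurableSet_Ioi
  simp only [Function.comp, add_sub_cancel_right, neg_add, exp_add]
  ring

theorem integrableOn_exp_neg_mul_of_abs_le_pow {γ : ℝ} (hγ : 0 ≤ γ) {f : ℝ → ℝ}
    (hf : Continuous f) {n : ℕ} (hle : ∀ l ∈ Ioi γ, |f l| ≤ l ^ n) :
    IntegrableOn (fun l => exp (-l) * f l) (Ioi γ) := by
  have hpow : IntegrableOn (fun l => exp (-l) * l ^ n) (Ioi γ) := by
    refine ((GammaIntegral_convergent (s := n + 1) (by positivity)).mono_set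
      (Ioi_subset_Ioi hγ)).congr_fun (fun l _ => ?_) measurableSet_Ioi
    simp [rpow_natCast]
  refine hpow.mono' (by fun_prop : Continuous _).aestronglyMeasurable.restrict
    ((ae_restrict_iff' measurableSet_Ioi).mpr (.of_forall fun l hl => ?_))
  rw [norm_mul, norm_of_nonneg (exp_pos _).le, norm_eq_abs]
  exact mul_le_mul_of_nonneg_left (hle l hl) (exp_pos _).le

theorem tendsto_exp_neg_mul_of_abs_le_pow {γ : ℝ} {f : ℝ → ℝ} {n : ℕ}
    (hle : ∀ l ∈ Ioi γ, |f l| ≤ l ^ n) :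
    Tendsto (fun l => exp (-l) * f l) atTop (𝓝 0) := by
  refine squeeze_zero_norm' ?_ (tendsto_pow_mul_exp_neg_atTop_nhds_zero n)
  filter_upwards [eventually_gt_atTop γ] with l hl
  rw [norm_mul, norm_of_nonneg (exp_pos _).le, norm_eq_abs, mul_comm]
  exact mul_le_mul_of_nonneg_right (hle l hl) (exp_pos _).le

theorem integral_exp_neg_mul_deriv {a : ℝ} (ha : 0 ≤ a) {f f' : ℝ → ℝ} {n : ℕ}
    (hf : Continuous f) (hfa : f a = 0) (hderiv : ∀ x ∈ Ioi a, HasDerivAt f (f' x) x)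
    (hle : ∀ x ∈ Ioi a, |f x| ≤ x ^ n)
    (hf' : IntegrableOn (fun x => exp (-x) * f' x) (Ioi a)) :
    ∫ x in Ioi a, exp (-x) * f' x = ∫ x in Ioi a, exp (-x) * f x := by
  have hfint := integrableOn_exp_neg_mul_of_abs_le_pow ha hf hle
  have key := integral_Ioi_of_hasDerivAt_of_tendsto (f := fun x => exp (-x) * f x)
    (f' := fun x => exp (-x) * f' x - exp (-x) * f x) (by fun_prop)
    (fun x hx => ((hasDerivAt_neg x).exp.mul (hderiv x hx)).congr_deriv (by ring))
    (hf'.sub hfint) (tendsto_exp_neg_mul_of_abs_le_pow hle)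
  rw [integral_sub hf' hfint, hfa, mul_zero, sub_zero] at key
  exact sub_eq_zero.mp key

section

variable {γ : ℝ}

theorem div_le_div_add_div_of_sq_eq_sq_sub_sq {l s : ℝ} (hγ : 0 < γ) (hs : 0 < s)
    (hs2 : s ^ 2 = l ^ 2 - γ ^ 2) : l / s ≤ γ / s + s / (2 * γ) := by
  have gap : γ / s + s / (2 * γ) - l / s = (l - γ) ^ 2 / (2 * γ * s) := by
    field_simp
    linear_combination hs2
  exact sub_nonneg.mp (gap ▸ by positivity)

theorem div_add_mul_le_of_sq_eq_sq_sub_sq {l s : ℝ} (hγ : 0 < γ) (hl : γ ≤ l) (hs : 0 < s)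
    (hs2 : s ^ 2 = l ^ 2 - γ ^ 2) :
    γ / s + 3 / (4 * γ) * s ≤ l / s + l * s / (4 * γ ^ 2) := by
  have gap : l / s + l * s / (4 * γ ^ 2) - (γ / s + 3 / (4 * γ) * s) =
      (l - γ) ^ 3 / (4 * γ ^ 2 * s) := by
    field_simp
    linear_combination (l - 3 * γ) * hs2
  exact sub_nonneg.mp (gap ▸ div_nonneg (pow_nonneg (sub_nonneg.2 hl) 3) (by positivity))

theorem sqrt_sq_sub_sq_le {l : ℝ} (hl : 0 ≤ l) : √(l ^ 2 - γ ^ 2) ≤ l :=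
  (sqrt_le_left hl).mpr (by nlinarith [sq_nonneg γ])

theorem abs_sqrt_sq_sub_sq_le {l : ℝ} (hl : 0 ≤ l) : |√(l ^ 2 - γ ^ 2)| ≤ l ^ 1 := by
  rw [abs_of_nonneg (sqrt_nonneg _), pow_one]
  exact sqrt_sq_sub_sq_le hl

theorem abs_mul_sqrt_sq_sub_sq_le {l : ℝ} (hl : 0 ≤ l) : |l * √(l ^ 2 - γ ^ 2)| ≤ l ^ 2 := by
  rw [abs_mul, abs_of_nonneg hl, abs_of_nonneg (sqrt_nonneg _)]
  exact (mul_le_mul_of_nonneg_left (sqrt_sq_sub_sq_le hl) hl).trans_eq (sq l).symm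

theorem integrableOn_exp_neg_div_sqrt (hγ : 0 < γ) :
    IntegrableOn (fun l => exp (-l) / √(l ^ 2 - γ ^ 2)) (Ioi γ) := by
  refine ((integrableOn_exp_neg_mul_sub_rpow γ (s := -(1 / 2)) (by norm_num)).const_mul
    (√(2 * γ))⁻¹).mono' (by fun_prop : Measurable _).aestronglyMeasurable
    ((ae_restrict_iff' measurableSet_Ioi).mpr (.of_forall fun l (hl : γ < l) => ?_))
  have hS : √(l - γ) * √(2 * γ) ≤ √(l ^ 2 - γ ^ 2) := by
    rw [← sqrt_mul (by linarith)]
    exact sqrt_le_sqrt (by nlinarith)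
  rw [norm_of_nonneg (by positivity), rpow_neg (by linarith), ← sqrt_eq_rpow]
  calc exp (-l) / √(l ^ 2 - γ ^ 2) ≤ exp (-l) / (√(l - γ) * √(2 * γ)) :=
        div_le_div_of_nonneg_left (exp_pos _).le (by positivity) hS
    _ = (√(2 * γ))⁻¹ * (exp (-l) * (√(l - γ))⁻¹) := by ring

theorem integrableOn_exp_neg_mul_sqrt (hγ : 0 ≤ γ) :
    IntegrableOn (fun l => exp (-l) * √(l ^ 2 - γ ^ 2)) (Ioi γ) :=
  integrableOn_exp_neg_mul_of_abs_le_pow hγ (by fun_prop) fun l (hl : γ < l) =>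
    abs_sqrt_sq_sub_sq_le (by linarith)

theorem integrableOn_exp_neg_mul_mul_sqrt (hγ : 0 ≤ γ) :
    IntegrableOn (fun l => exp (-l) * (l * √(l ^ 2 - γ ^ 2))) (Ioi γ) :=
  integrableOn_exp_neg_mul_of_abs_le_pow hγ (by fun_prop) fun l (hl : γ < l) =>
    abs_mul_sqrt_sq_sub_sq_le (by linarith)

theorem integrableOn_exp_neg_mul_div_sqrt (hγ : 0 < γ) :
    IntegrableOn (fun l => exp (-l) * (l / √(l ^ 2 - γ ^ 2))) (Ioi γ) := by
  refine (((integrableOn_exp_neg_div_sqrt hγ).const_mul γ).add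
    ((integrableOn_exp_neg_mul_sqrt hγ.le).div_const (2 * γ))).mono'
    (by fun_prop : Measurable _).aestronglyMeasurable
    ((ae_restrict_iff' measurableSet_Ioi).mpr (.of_forall fun l (hl : γ < l) => ?_))
  have hS : 0 < √(l ^ 2 - γ ^ 2) := sqrt_pos.mpr (by nlinarith)
  rw [norm_of_nonneg (mul_nonneg (exp_pos _).le (div_nonneg (by linarith) hS.le))]
  calc exp (-l) * (l / √(l ^ 2 - γ ^ 2))
      ≤ exp (-l) * (γ / √(l ^ 2 - γ ^ 2) + √(l ^ 2 - γ ^ 2) / (2 * γ)) :=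
        mul_le_mul_of_nonneg_left (div_le_div_add_div_of_sq_eq_sq_sub_sq hγ hS
          (sq_sqrt (by nlinarith))) (exp_pos _).le
    _ = _ := by simp only [Pi.add_apply]; ring

theorem hasDerivAt_sqrt_sq_sub_sq {l : ℝ} (hl : γ ^ 2 < l ^ 2) :
    HasDerivAt (fun l => √(l ^ 2 - γ ^ 2)) (l / √(l ^ 2 - γ ^ 2)) l := by
  refine (((hasDerivAt_pow 2 l).sub_const (γ ^ 2)).sqrt (by linarith)).congr_deriv ?_
  field_simp
  ring

theorem integral_exp_neg_mul_div_sqrt (hγ : 0 < γ) :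
    ∫ l in Ioi γ, exp (-l) * (l / √(l ^ 2 - γ ^ 2)) =
      ∫ l in Ioi γ, exp (-l) * √(l ^ 2 - γ ^ 2) :=
  integral_exp_neg_mul_deriv hγ.le (by fun_prop) (by simp)
    (fun l (hl : γ < l) => hasDerivAt_sqrt_sq_sub_sq (by nlinarith))
    (fun l (hl : γ < l) => abs_sqrt_sq_sub_sq_le (by linarith))
    (integrableOn_exp_neg_mul_div_sqrt hγ)

theorem integral_exp_neg_mul_mul_sqrt (hγ : 0 < γ) :
    ∫ l in Ioi γ, exp (-l) * (l * √(l ^ 2 - γ ^ 2)) =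
      2 * (∫ l in Ioi γ, exp (-l) * √(l ^ 2 - γ ^ 2)) +
        γ ^ 2 * ∫ l in Ioi γ, exp (-l) / √(l ^ 2 - γ ^ 2) := by
  have hS := integrableOn_exp_neg_mul_sqrt hγ.le
  have hS' := integrableOn_exp_neg_div_sqrt hγ
  have hderiv (l : ℝ) (hl : γ < l) : HasDerivAt (fun l => l * √(l ^ 2 - γ ^ 2))
      (2 * √(l ^ 2 - γ ^ 2) + γ ^ 2 / √(l ^ 2 - γ ^ 2)) l := by
    have hpos : 0 < l ^ 2 - γ ^ 2 := by nlinarith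
    refine ((hasDerivAt_id l).mul (hasDerivAt_sqrt_sq_sub_sq (by linarith))).congr_deriv ?_
    field_simp
    rw [sq_sqrt hpos.le, id]
    ring
  have hsum := (hS.const_mul 2).add (hS'.const_mul (γ ^ 2))
  calc ∫ l in Ioi γ, exp (-l) * (l * √(l ^ 2 - γ ^ 2))
      = ∫ l in Ioi γ, exp (-l) * (2 * √(l ^ 2 - γ ^ 2) + γ ^ 2 / √(l ^ 2 - γ ^ 2)) :=
        (integral_exp_neg_mul_deriv hγ.le (by fun_prop) (by simp) hderiv
          (fun l (hl : γ < l) => abs_mul_sqrt_sq_sub_sq_le (by linarith))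
          (IntegrableOn.congr_fun hsum (fun l _ => by simp only [Pi.add_apply]; ring)
            measurableSet_Ioi)).symm
    _ = ∫ l in Ioi γ, (2 * (exp (-l) * √(l ^ 2 - γ ^ 2)) +
          γ ^ 2 * (exp (-l) / √(l ^ 2 - γ ^ 2))) :=
        setIntegral_congr_fun measurableSet_Ioi fun l _ => by ring
    _ = _ := by
        rw [integral_add (hS.const_mul 2) (hS'.const_mul (γ ^ 2)), integral_const_mul,
          integral_const_mul]

theorem besselK_zero_eq (hγ : 0 ≤ γ) :
    besselK 0 γ = ∫ l in Ioi γ, exp (-l) / √(l ^ 2 - γ ^ 2) := by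
  simp only [besselK, pow_zero, Nat.factorial_zero, Nat.cast_one, mul_zero, CharP.cast_eq_zero,
    neg_zero, rpow_zero, div_one, one_mul, zero_sub]
  refine setIntegral_congr_fun measurableSet_Ioi fun l (hl : γ < l) => ?_
  rw [rpow_neg (by nlinarith), ← sqrt_eq_rpow, div_eq_mul_inv]

theorem besselK_one_eq :
    besselK 1 γ = (∫ l in Ioi γ, exp (-l) * √(l ^ 2 - γ ^ 2)) / γ := by
  simp only [besselK, Nat.factorial, Nat.cast_one, rpow_neg_one, sqrt_eq_rpow]
  norm_num
  ring

theorem besselK_one_pos (hγ : 0 < γ) : 0 < besselK 1 γ := by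
  have hsupp : Ioi γ ⊆ Function.support fun l => exp (-l) * √(l ^ 2 - γ ^ 2) :=
    fun l (hl : γ < l) => (mul_pos (exp_pos _) (sqrt_pos.mpr (by nlinarith))).ne'
  rw [besselK_one_eq]
  refine div_pos ((setIntegral_pos_iff_support_of_nonneg_ae
    (.of_forall fun l => by positivity) (integrableOn_exp_neg_mul_sqrt hγ.le)).mpr ?_) hγ
  rw [inter_eq_right.mpr hsupp, Real.volume_Ioi]
  exact ENNReal.zero_lt_top

theorem one_sub_inv_two_mul_besselK_one_le (hγ : 0 < γ) :
    (1 - 1 / (2 * γ)) * besselK 1 γ ≤ besselK 0 γ := by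
  have hA := integrableOn_exp_neg_div_sqrt hγ
  have hB := integrableOn_exp_neg_mul_sqrt hγ.le
  set A := ∫ l in Ioi γ, exp (-l) / √(l ^ 2 - γ ^ 2)
  set B := ∫ l in Ioi γ, exp (-l) * √(l ^ 2 - γ ^ 2)
  have key : B ≤ γ * A + B / (2 * γ) := calc
    B = ∫ l in Ioi γ, exp (-l) * (l / √(l ^ 2 - γ ^ 2)) :=
        (integral_exp_neg_mul_div_sqrt hγ).symm
    _ ≤ ∫ l in Ioi γ,
          (γ * (exp (-l) / √(l ^ 2 - γ ^ 2)) + exp (-l) * √(l ^ 2 - γ ^ 2) / (2 * γ)) := by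
      refine setIntegral_mono_on (integrableOn_exp_neg_mul_div_sqrt hγ)
        ((hA.const_mul γ).add (hB.div_const _)) measurableSet_Ioi fun l (hl : γ < l) => ?_
      have hS : 0 < √(l ^ 2 - γ ^ 2) := sqrt_pos.mpr (by nlinarith)
      have := mul_le_mul_of_nonneg_left (div_le_div_add_div_of_sq_eq_sq_sub_sq hγ hS
        (sq_sqrt (by nlinarith))) (exp_pos (-l)).le
      convert this using 1
      ring
    _ = γ * A + B / (2 * γ) := by
      rw [integral_add (hA.const_mul γ) (hB.div_const _), integral_const_mul, integral_div]
  rw [besselK_zero_eq hγ.le, besselK_one_eq]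
  calc (1 - 1 / (2 * γ)) * (B / γ) = (B - B / (2 * γ)) / γ := by ring
    _ ≤ γ * A / γ := by gcongr; linarith
    _ = A := by field_simp

theorem besselK_zero_mul_le (hγ : 0 < γ) :
    (γ - 1 / 4) * besselK 0 γ ≤ (γ - 3 / 4 + 1 / (2 * γ)) * besselK 1 γ := by
  have hA := integrableOn_exp_neg_div_sqrt hγ
  have hB := integrableOn_exp_neg_mul_sqrt hγ.le
  set A := ∫ l in Ioi γ, exp (-l) / √(l ^ 2 - γ ^ 2)
  set B := ∫ l in Ioi γ, exp (-l) * √(l ^ 2 - γ ^ 2)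
  have key : γ * A + 3 / (4 * γ) * B ≤ B + (2 * B + γ ^ 2 * A) / (4 * γ ^ 2) := calc
    γ * A + 3 / (4 * γ) * B = ∫ l in Ioi γ,
        (γ * (exp (-l) / √(l ^ 2 - γ ^ 2)) + 3 / (4 * γ) * (exp (-l) * √(l ^ 2 - γ ^ 2))) := by
      rw [integral_add (hA.const_mul γ) (hB.const_mul _), integral_const_mul, integral_const_mul]
    _ ≤ ∫ l in Ioi γ, (exp (-l) * (l / √(l ^ 2 - γ ^ 2)) +
          exp (-l) * (l * √(l ^ 2 - γ ^ 2)) / (4 * γ ^ 2)) := by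
      refine setIntegral_mono_on ((hA.const_mul γ).add (hB.const_mul _))
        ((integrableOn_exp_neg_mul_div_sqrt hγ).add
          ((integrableOn_exp_neg_mul_mul_sqrt hγ.le).div_const _)) measurableSet_Ioi
        fun l (hl : γ < l) => ?_
      have hS : 0 < √(l ^ 2 - γ ^ 2) := sqrt_pos.mpr (by nlinarith)
      have := mul_le_mul_of_nonneg_left (div_add_mul_le_of_sq_eq_sq_sub_sq hγ hl.le hS
        (sq_sqrt (by nlinarith))) (exp_pos (-l)).le
      convert this using 1 <;> ring
    _ = B + (2 * B + γ ^ 2 * A) / (4 * γ ^ 2) := by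
      rw [integral_add (integrableOn_exp_neg_mul_div_sqrt hγ)
        ((integrableOn_exp_neg_mul_mul_sqrt hγ.le).div_const _), integral_div,
        integral_exp_neg_mul_div_sqrt hγ, integral_exp_neg_mul_mul_sqrt hγ]
  rw [besselK_zero_eq hγ.le, besselK_one_eq]
  have expand : (γ - 3 / 4 + 1 / (2 * γ)) * (B / γ) - (γ - 1 / 4) * A =
      B + (2 * B + γ ^ 2 * A) / (4 * γ ^ 2) - (γ * A + 3 / (4 * γ) * B) := by
    field_simp
    ring
  linarith

end

/-- Quantitative bounds for the ratio K₀/K₁ in the regime γ > √2. -/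
theorem besselK_ratio_bounds (γ : ℝ) (hγ : Real.sqrt 2 < γ) :
    1 - 1 / (2 * γ) ≤ besselK 0 γ / besselK 1 γ ∧
    besselK 0 γ / besselK 1 γ ≤ 1 - 1 / (2 * γ) + 3 / (8 * γ ^ 2) + 3 / (16 * γ ^ 3) := by
  have hγ1 : 1 < γ := one_lt_sqrt_two.trans hγ
  have hγ0 : 0 < γ := by linarith
  have hK1 := besselK_one_pos hγ0
  have gap : (1 - 1 / (2 * γ) + 3 / (8 * γ ^ 2) + 3 / (16 * γ ^ 3)) * (γ - 1 / 4) -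
      (γ - 3 / 4 + 1 / (2 * γ)) = 3 * (2 * γ - 1) / (64 * γ ^ 3) := by
    field_simp
    ring
  refine ⟨(le_div_iff₀ hK1).mpr (one_sub_inv_two_mul_besselK_one_le hγ0),
    (div_le_iff₀ hK1).mpr (le_of_mul_le_mul_left ?_ (by linarith : (0 : ℝ) < γ - 1 / 4))⟩
  calc (γ - 1 / 4) * besselK 0 γ ≤ (γ - 3 / 4 + 1 / (2 * γ)) * besselK 1 γ :=
        besselK_zero_mul_le hγ0
    _ ≤ ((1 - 1 / (2 * γ) + 3 / (8 * γ ^ 2) + 3 / (16 * γ ^ 3)) * (γ - 1 / 4)) *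
          besselK 1 γ := by
        gcongr
        exact sub_nonneg.mp (gap ▸ div_nonneg (by linarith) (by positivity))
    _ = _ := by ring
end
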